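/- In the setting of the Gibbs frontier concentration: let z_1, ..., z_G ∈ [0,1], define P = Σ_i r_i z_i and the frontier-restricted average P_S = Σ_{i∈S} (r_i / Σ_{m∈S} r_m)·z_i. Under the same gap condition min_{i∈S} R_i ≥ max_{j∉S} R_j + δ with δ > 0, one has |P - P_S| ≤ ((G - |S|)/|S|)·exp(-δ/T). -/
import Mathlib


theorem stmt6 (G : ℕ) (hG : 2 ≤ G) (T : ℝ) (hT : 0 < T) (R : Fin G → ℝ)
    (r : Fin G → ℝ) (hr : r = fun i => Real.exp (R i / T) / ∑ n, Real.exp (R n / T))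
    (S : Finset (Fin G)) (hS : S.Nonempty) (hSproper : S ≠ Finset.univ)
    (hSc : Sᶜ.Nonempty) (δ : ℝ) (hδ : 0 < δ)
    (hgap : S.inf' hS R ≥ Sᶜ.sup' hSc R + δ)
    (z : Fin G → ℝ) (hz : ∀ i, z i ∈ Set.Icc (0:ℝ) 1)
    (P PS : ℝ) (hP : P = ∑ i, r i * z i)
    (hPS : PS = ∑ i ∈ S, (r i / ∑ m ∈ S, r m) * z i) :
    |P - PS| ≤ (((G : ℝ) - S.card) / S.card) * Real.exp (-δ / T) := by
  set Z : ℝ := ∑ n, Real.exp (R n / T) with hZ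
  haveI : Nonempty (Fin G) := ⟨⟨0, by omega⟩⟩
  have hZpos : 0 < Z := Finset.sum_pos (fun i _ => Real.exp_pos _) Finset.univ_nonempty
  have hrpos : ∀ i, 0 < r i := by
    intro i; rw [hr]; exact div_pos (Real.exp_pos _) hZpos
  set ρ : ℝ := ∑ i ∈ S, r i with hρ
  set σ : ℝ := ∑ j ∈ Sᶜ, r j with hσ
  have hρpos : 0 < ρ := Finset.sum_pos (fun i _ => hrpos i) hS
  have hσnn : 0 ≤ σ := Finset.sum_nonneg (fun j _ => (hrpos j).le)
  set A : ℝ := ∑ j ∈ Sᶜ, r j * z j with hA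
  set B : ℝ := ∑ i ∈ S, r i * z i with hB
  have hAnn : 0 ≤ A := Finset.sum_nonneg fun j _ => mul_nonneg (hrpos j).le (hz j).1
  have hBnn : 0 ≤ B := Finset.sum_nonneg fun i _ => mul_nonneg (hrpos i).le (hz i).1
  have hAσ : A ≤ σ := Finset.sum_le_sum fun j _ => by
    nlinarith [(hz j).2, (hrpos j).le]
  have hBρ : B ≤ ρ := Finset.sum_le_sum fun i _ => by
    nlinarith [(hz i).2, (hrpos i).le]
  -- P - PS = A - (σ/ρ) * B
  have hPeq : P = B + A := by
    rw [hP, hB, hA, ← Finset.sum_add_sum_compl S]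
  have hPSeq : PS = B / ρ := by
    rw [hPS, hB, Finset.sum_div]
    exact Finset.sum_congr rfl fun i _ => by rw [div_mul_eq_mul_div]
  have hsum1 : ρ + σ = 1 := by
    rw [hρ, hσ, Finset.sum_add_sum_compl, hr]
    simp only
    rw [← Finset.sum_div, div_self hZpos.ne']
  have key : |P - PS| ≤ σ := by
    have hdiff : P - PS = A - (σ / ρ) * B := by
      have h1 : B / ρ = B + (σ / ρ) * B := by
        field_simp
        nlinarith [hsum1]
      rw [hPeq, hPSeq, h1]; ring
    rw [hdiff, abs_sub_le_iff]
    constructor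
    · have : (σ / ρ) * B ≥ 0 := mul_nonneg (div_nonneg hσnn hρpos.le) hBnn
      linarith
    · have : (σ / ρ) * B ≤ σ := by
        rw [div_mul_eq_mul_div, div_le_iff₀ hρpos]
        nlinarith
      linarith
  -- mass bound
  have hcardS : 0 < (S.card : ℝ) := by exact_mod_cast Finset.card_pos.mpr hS
  have hmass : σ ≤ (((G : ℝ) - S.card) / S.card) * Real.exp (-δ / T) := by
    have hrj : ∀ j ∈ Sᶜ, r j ≤ Real.exp (-δ / T) / S.card := by
      intro j hj
      have hbound : (S.card : ℝ) * Real.exp (R j / T) ≤ Real.exp (-δ / T) * Z := by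
        have h1 : (S.card : ℝ) * Real.exp (R j / T)
            ≤ ∑ i ∈ S, Real.exp (-δ / T) * Real.exp (R i / T) := by
          have h0 : (S.card : ℝ) * Real.exp (R j / T)
              = ∑ _i ∈ S, Real.exp (R j / T) := by
            rw [Finset.sum_const, nsmul_eq_mul]
          rw [h0]
          refine Finset.sum_le_sum fun i hi => ?_
          rw [← Real.exp_add]
          apply Real.exp_le_exp.mpr
          have hji : R j ≤ R i - δ := by
            have h2 : R j ≤ Sᶜ.sup' hSc R := Finset.le_sup' R hj
            have h3 : S.inf' hS R ≤ R i := Finset.inf'_le R hi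
            linarith
          have h4 : R j / T ≤ (R i - δ) / T := by gcongr
          have h5 : (R i - δ) / T = -δ / T + R i / T := by ring
          linarith
        have h2 : ∑ i ∈ S, Real.exp (-δ / T) * Real.exp (R i / T)
            ≤ Real.exp (-δ / T) * Z := by
          rw [← Finset.mul_sum]
          apply mul_le_mul_of_nonneg_left ?_ (Real.exp_pos _).le
          rw [hZ]
          exact Finset.sum_le_sum_of_subset_of_nonneg (Finset.subset_univ S)
            (fun i _ _ => (Real.exp_pos _).le)
        linarith
      rw [hr]
      rw [div_le_div_iff₀ hZpos hcardS]
      calc Real.exp (R j / T) * S.card = (S.card : ℝ) * Real.exp (R j / T) := by ring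
        _ ≤ Real.exp (-δ / T) * Z := hbound
    have hσle : σ ≤ Sᶜ.card * (Real.exp (-δ / T) / S.card) := by
      rw [hσ]
      calc ∑ j ∈ Sᶜ, r j ≤ ∑ _j ∈ Sᶜ, Real.exp (-δ / T) / S.card :=
            Finset.sum_le_sum hrj
        _ = Sᶜ.card * (Real.exp (-δ / T) / S.card) := by
            rw [Finset.sum_const, nsmul_eq_mul]
    have hcc : (Sᶜ.card : ℝ) = (G : ℝ) - S.card := by
      have := Finset.card_compl S
      rw [this]
      have hle : S.card ≤ Fintype.card (Fin G) := Finset.card_le_univ S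
      push_cast [Nat.cast_sub hle]
      simp
    calc σ ≤ Sᶜ.card * (Real.exp (-δ / T) / S.card) := hσle
      _ = (((G : ℝ) - S.card) / S.card) * Real.exp (-δ / T) := by rw [hcc]; ring
  linarith
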